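/- Let A be a 2n-self-dual graded commutative K-algebra (char K = 0) with vanishing odd part, V a finite-dimensional graded vector space, and π : Sym(V) → A a surjective graded algebra homomorphism. Let α : A → K be a 2n-homogeneous linear function inducing an isomorphism A^{2n} ≅ K, and set ℓ = α ∘ π. Then ker π = Ann(Exp^*(ℓ)) := { P ∈ Sym(V) : D_P(Exp^*(ℓ)) = 0 }, where D_P is the constant-coefficient differential operator corresponding to P; hence A ≅ Sym(V)/Ann(Exp^*(ℓ)). -/

import Mathlib

open MvPolynomial

/-- The constant-coefficient differential operator `D_P` associated to a
polynomial `P` (in variables indexed by `Fin r`). -/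
noncomputable def diffOp {K : Type*} [CommRing K] {r : ℕ}
    (p : MvPolynomial (Fin r) K) : Module.End K (MvPolynomial (Fin r) K) :=
  (AddMonoidAlgebra.coeff p).sum fun m c =>
    c • ((List.ofFn fun i : Fin r => ((pderiv i).toLinearMap ^ m i)).prod)

lemma stmt14.descFactorial_succ' (n k : ℕ) :
    n.descFactorial (k+1) = n * ((n-1).descFactorial k) := by
  cases n with
  | zero => simp [Nat.zero_descFactorial_succ]
  | succ m => rw [Nat.succ_descFactorial_succ]; simp

lemma stmt14.pderiv_pow_monomial {K : Type*} [CommSemiring K] {r : ℕ}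
    (i : Fin r) (k : ℕ) (β : Fin r →₀ ℕ) (d : K) :
    (((pderiv i).toLinearMap) ^ k) (monomial β d)
      = monomial (β - Finsupp.single i k) (d * ((β i).descFactorial k : ℕ)) := by
  induction k generalizing β d with
  | zero => simp
  | succ k ih =>
      rw [pow_succ, Module.End.mul_apply]
      have h1 : (pderiv i).toLinearMap (monomial β d)
          = monomial (β - Finsupp.single i 1) (d * β i) := by simp
      have h2 := Finsupp.tsub_apply β (Finsupp.single i 1) i
      rw [h1, ih]
      rw [tsub_tsub, ← Finsupp.single_add, add_comm 1 k]
      congr 1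
      rw [h2, mul_assoc, stmt14.descFactorial_succ' (β i) k]
      simp [Finsupp.single_eq_same, Nat.cast_mul]

lemma stmt14.prodList_monomial {K : Type*} [CommSemiring K] {r : ℕ}
    (γ : Fin r →₀ ℕ) (d : K) (L : List (Fin r)) (hL : L.Nodup) (β : Fin r →₀ ℕ) :
    ((L.map fun i => ((pderiv (R := K) i).toLinearMap ^ γ i)).prod) (monomial β d)
      = monomial (β - ∑ i ∈ L.toFinset, Finsupp.single i (γ i))
          (d * ∏ i ∈ L.toFinset, ((β i).descFactorial (γ i) : K)) := by
  induction L generalizing β d with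
  | nil => simp
  | cons i L ih =>
      obtain ⟨hiL, hN⟩ := List.nodup_cons.mp hL
      have hiF : i ∉ L.toFinset := by simpa using hiL
      rw [List.map_cons, List.prod_cons, Module.End.mul_apply, ih d hN β,
        stmt14.pderiv_pow_monomial, List.toFinset_cons, Finset.sum_insert hiF,
        Finset.prod_insert hiF]
      have hs : (∑ j ∈ L.toFinset, Finsupp.single j (γ j)) i = 0 := by
        rw [Finsupp.finset_sum_apply]
        exact Finset.sum_eq_zero fun j hj =>
          Finsupp.single_eq_of_ne (by rintro rfl; exact hiF hj)
      have hβ : (β - ∑ j ∈ L.toFinset, Finsupp.single j (γ j)) i = β i := by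
        rw [Finsupp.tsub_apply, hs, Nat.sub_zero]
      rw [hβ, tsub_tsub]
      congr 1
      · rw [add_comm]
      · ring

lemma stmt14.sum_single_univ {r : ℕ} (γ : Fin r →₀ ℕ) :
    ∑ i : Fin r, Finsupp.single i (γ i) = γ := by
  ext a
  rw [Finsupp.finset_sum_apply]
  simp [Finsupp.single_apply]

lemma stmt14.prodOfFn_monomial {K : Type*} [CommSemiring K] {r : ℕ}
    (γ β : Fin r →₀ ℕ) (d : K) :
    ((List.ofFn fun i : Fin r => ((pderiv (R := K) i).toLinearMap ^ γ i)).prod) (monomial β d)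
      = monomial (β - γ) (d * ∏ i : Fin r, ((β i).descFactorial (γ i) : K)) := by
  rw [List.ofFn_eq_map, stmt14.prodList_monomial γ d _ (List.nodup_finRange r) β]
  rw [List.toFinset_finRange, stmt14.sum_single_univ]

lemma stmt14.diffOp_apply {K : Type*} [CommRing K] {r : ℕ}
    (p q : MvPolynomial (Fin r) K) :
    diffOp p q = ∑ γ ∈ p.support, coeff γ p •
      ((List.ofFn fun i : Fin r => ((pderiv (R := K) i).toLinearMap ^ γ i)).prod q) := by
  rw [diffOp, Finsupp.sum]
  rw [LinearMap.coe_sum, Finset.sum_apply]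
  exact Finset.sum_congr rfl fun γ _ => LinearMap.smul_apply _ _ _

/-- `monomial β 1` as a product of variables. -/
lemma stmt14.monomial_one_eq {K : Type*} [CommSemiring K] {r : ℕ} (β : Fin r →₀ ℕ) :
    (monomial β 1 : MvPolynomial (Fin r) K) = ∏ i : Fin r, (X i : MvPolynomial (Fin r) K) ^ β i := by
  rw [monomial_eq, map_one, one_mul]
  exact Finsupp.prod_fintype _ _ (fun i => pow_zero _)

/-- Let `A` be a `2n`-self-dual graded commutative algebra with vanishing odd
part, `π : Sym(V) → A` a surjective graded algebra homomorphism (with `Sym(V)`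
modeled by a weighted polynomial ring), `α : A^{2n} ≅ K` and `ℓ = α ∘ π`.
Then `ker π = Ann(Exp^*(ℓ))`, the annihilator of the potential
`Φ = Exp^*(ℓ)` under constant-coefficient differential operators; hence
`A ≅ Sym(V)/Ann(Exp^*(ℓ))`. -/
theorem stmt14 {K : Type*} [Field K] [CharZero K] {r : ℕ}
    {A : Type*} [CommRing A] [Algebra K A]
    (n : ℕ) (𝒜 : ℕ → Submodule K A) [GradedAlgebra 𝒜]
    (hodd : ∀ m : ℕ, Odd m → 𝒜 m = ⊥)
    (htop : ∀ m : ℕ, 2 * n < m → 𝒜 m = ⊥)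
    (hfr : Module.finrank K (𝒜 (2 * n)) = 1)
    (hpair : ∀ m : ℕ, m ≤ 2 * n → ∀ a ∈ 𝒜 m, a ≠ 0 →
      ∃ b ∈ 𝒜 (2 * n - m), a * b ≠ 0)
    (w : Fin r → ℕ) (hw : ∀ j, w j ≠ 0) (hwe : ∀ j, Even (w j))
    (π : MvPolynomial (Fin r) K →ₐ[K] A) (hsurj : Function.Surjective π)
    (hgr : ∀ (p : MvPolynomial (Fin r) K) (d : ℕ),
      p.IsWeightedHomogeneous w d → π p ∈ 𝒜 d)
    (α : (𝒜 (2 * n)) ≃ₗ[K] K)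
    (ℓ : MvPolynomial (Fin r) K → K)
    (hℓ : ∀ p : MvPolynomial (Fin r) K,
      ℓ p = α (DirectSum.decompose 𝒜 (π p) (2 * n)))
    (Φ : MvPolynomial (Fin r) K)
    (hΦ : ∀ x : Fin r → K, eval x Φ =
      ∑ i ∈ Finset.range (2 * n + 1),
        (i.factorial : K)⁻¹ * ℓ ((∑ j, x j • (X j : MvPolynomial (Fin r) K)) ^ i)) :
    (∀ p : MvPolynomial (Fin r) K, π p = 0 ↔ diffOp p Φ = 0) ∧
    Nonempty (A ≃ₐ[K]
      (MvPolynomial (Fin r) K ⧸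
        Ideal.span {p : MvPolynomial (Fin r) K | diffOp p Φ = 0})) := by
  classical
  -- the potential functional as a linear map
  set L : MvPolynomial (Fin r) K →ₗ[K] K :=
    α.toLinearMap ∘ₗ (DirectSum.component K ℕ (fun i => ↥(𝒜 i)) (2*n)) ∘ₗ
      (DirectSum.decomposeLinearEquiv 𝒜).toLinearMap ∘ₗ π.toLinearMap with hLdef
  have hLapp : ∀ p, L p = α (DirectSum.decompose 𝒜 (π p) (2*n)) := fun p => rfl
  have hL : ∀ p, ℓ p = L p := fun p => by rw [hℓ p, hLapp]
  have hLzero : ∀ q, π q = 0 → L q = 0 := by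
    intro q h
    rw [hLapp, h, DirectSum.decompose_zero]
    simp
  have hLmon : ∀ β : Fin r →₀ ℕ, 2*n < ∑ i, β i → L (monomial β 1) = 0 := by
    intro β hβ
    apply hLzero
    have hhom := isWeightedHomogeneous_monomial w β (1:K) rfl
    have hmem := hgr _ _ hhom
    have hge : (∑ i, β i) ≤ Finsupp.weight w β := by
      rw [Finsupp.weight_apply, Finsupp.sum]
      calc ∑ i, β i = ∑ i ∈ β.support, β i := by
            exact (Finset.sum_subset (Finset.subset_univ _)
              (fun i _ hi => Finsupp.notMem_support_iff.mp hi)).symm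
        _ ≤ ∑ i ∈ β.support, β i • w i := Finset.sum_le_sum fun i _ => by
            have := Nat.one_le_iff_ne_zero.mpr (hw i)
            simpa [smul_eq_mul] using Nat.le_mul_of_pos_right (β i) (by omega)
    rw [htop _ (lt_of_lt_of_le hβ hge)] at hmem
    simpa using hmem
  -- the candidate polynomial
  set S : Finset (Fin r →₀ ℕ) := (Finset.range (2*n+1)).biUnion
      (fun i => (Finset.piAntidiag (Finset.univ : Finset (Fin r)) i).map
        (Finsupp.equivFunOnFinite.symm.toEmbedding)) with hSdef
  have hS : ∀ β : Fin r →₀ ℕ, β ∈ S ↔ ∑ i, β i ≤ 2*n := by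
    intro β
    simp only [hSdef, Finset.mem_biUnion, Finset.mem_range, Finset.mem_map,
      Finset.mem_piAntidiag, Equiv.toEmbedding_apply]
    constructor
    · rintro ⟨i, hi, k, ⟨hk, -⟩, rfl⟩
      have h2 : (∑ j, (Finsupp.equivFunOnFinite.symm k) j) = Finset.univ.sum k := rfl
      omega
    · intro h
      exact ⟨∑ i, β i, by omega, Finsupp.equivFunOnFinite β,
        ⟨rfl, fun i _ => Finset.mem_univ i⟩, by simp⟩
  set c : (Fin r →₀ ℕ) → K :=
    fun β => (∏ i, ((β i).factorial : K))⁻¹ * L (monomial β 1) with hcdef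
  set Ψ : MvPolynomial (Fin r) K := ∑ β ∈ S, monomial β (c β) with hΨdef
  have hfacne : ∀ β : Fin r →₀ ℕ, (∏ i, ((β i).factorial : K)) ≠ 0 := by
    intro β
    refine Finset.prod_ne_zero_iff.mpr fun i _ => ?_
    exact_mod_cast Nat.cast_ne_zero.mpr (Nat.factorial_ne_zero _)
  have hΦΨ : Φ = Ψ := by
    apply MvPolynomial.funext
    intro x
    rw [hΦ x]
    have hΨeval : eval x Ψ = ∑ β ∈ S, c β * ∏ i, x i ^ β i := by
      rw [hΨdef, map_sum]
      refine Finset.sum_congr rfl fun β _ => ?_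
      rw [eval_monomial]
      congr 1
      exact Finsupp.prod_fintype _ _ fun i => pow_zero _
    rw [hΨeval]
    have hpow : ∀ i : ℕ, ((∑ j, x j • (X j : MvPolynomial (Fin r) K)) ^ i)
        = ∑ k ∈ Finset.piAntidiag (Finset.univ : Finset (Fin r)) i,
            ((Nat.multinomial Finset.univ k : K) * ∏ j, x j ^ k j) •
              monomial (Finsupp.equivFunOnFinite.symm k) 1 := by
      intro i
      rw [Finset.sum_pow_eq_sum_piAntidiag]
      refine Finset.sum_congr rfl fun k hk => ?_
      have h1 : ∀ j : Fin r, (x j • (X j : MvPolynomial (Fin r) K)) ^ k j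
          = C (x j ^ k j) * (X j) ^ k j := by
        intro j
        rw [smul_eq_C_mul, mul_pow, C_pow]
      calc (Nat.multinomial Finset.univ k : MvPolynomial (Fin r) K) *
            ∏ j, (x j • (X j : MvPolynomial (Fin r) K)) ^ k j
          = C ((Nat.multinomial Finset.univ k : K) * ∏ j, x j ^ k j) *
              ∏ j, (X j : MvPolynomial (Fin r) K) ^ k j := by
            simp_rw [h1]
            rw [Finset.prod_mul_distrib, map_mul, map_prod]
            simp_rw [C_pow]
            rw [← C_eq_coe_nat]
            ring
        _ = _ := by
            rw [smul_eq_C_mul, stmt14.monomial_one_eq]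
            rfl
    have hterm : ∀ (i : ℕ), ∀ k ∈ Finset.piAntidiag (Finset.univ : Finset (Fin r)) i,
        (i.factorial : K)⁻¹ * (((Nat.multinomial Finset.univ k : K) * ∏ j, x j ^ k j) *
            L (monomial (Finsupp.equivFunOnFinite.symm k) 1))
        = c (Finsupp.equivFunOnFinite.symm k) *
            ∏ j, x j ^ (Finsupp.equivFunOnFinite.symm k) j := by
      intro i k hk
      have hsum : Finset.univ.sum k = i := (Finset.mem_piAntidiag.mp hk).1
      have hms := Nat.multinomial_spec (Finset.univ : Finset (Fin r)) k
      rw [hsum] at hms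
      have hfac : ((i.factorial : K))
          = (∏ j, ((k j).factorial : K)) * (Nat.multinomial Finset.univ k : K) := by
        exact_mod_cast congrArg (Nat.cast (R := K)) hms.symm
      have happ : ∀ j, (Finsupp.equivFunOnFinite.symm k) j = k j := fun j => rfl
      rw [hcdef]
      simp only [happ]
      rw [hfac, mul_inv]
      have hM : (Nat.multinomial Finset.univ k : K) ≠ 0 :=
        Nat.cast_ne_zero.mpr (Nat.pos_iff_ne_zero.mp (Nat.multinomial_pos _ _))
      have hF : (∏ j, ((k j).factorial : K)) ≠ 0 := by
        refine Finset.prod_ne_zero_iff.mpr fun j _ => ?_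
        exact Nat.cast_ne_zero.mpr (Nat.factorial_ne_zero _)
      field_simp
    have hdisj : (↑(Finset.range (2*n+1)) : Set ℕ).PairwiseDisjoint
        (fun i => (Finset.piAntidiag (Finset.univ : Finset (Fin r)) i).map
          (Finsupp.equivFunOnFinite.symm.toEmbedding)) := by
      intro i _ j _ hij
      simp only [Function.onFun]
      rw [Finset.disjoint_left]
      rintro β hβi hβj
      simp only [Finset.mem_map, Finset.mem_piAntidiag, Equiv.toEmbedding_apply] at hβi hβj
      obtain ⟨k1, ⟨hk1, -⟩, rfl⟩ := hβi
      obtain ⟨k2, ⟨hk2, -⟩, hk⟩ := hβj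
      have hkk := Finsupp.equivFunOnFinite.symm.injective hk
      exact hij (by rw [← hk1, ← hk2, hkk])
    calc ∑ i ∈ Finset.range (2*n+1),
          (i.factorial:K)⁻¹ * ℓ ((∑ j, x j • (X j : MvPolynomial (Fin r) K))^i)
        = ∑ i ∈ Finset.range (2*n+1), ∑ k ∈ Finset.piAntidiag Finset.univ i,
            c (Finsupp.equivFunOnFinite.symm k) *
              ∏ j, x j ^ (Finsupp.equivFunOnFinite.symm k) j := by
          refine Finset.sum_congr rfl fun i hi => ?_
          rw [hL, hpow i, map_sum, Finset.mul_sum]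
          refine Finset.sum_congr rfl fun k hk => ?_
          rw [map_smul, smul_eq_mul]
          exact hterm i k hk
      _ = ∑ i ∈ Finset.range (2*n+1),
            ∑ β ∈ (Finset.piAntidiag (Finset.univ : Finset (Fin r)) i).map
              (Finsupp.equivFunOnFinite.symm.toEmbedding), c β * ∏ j, x j ^ β j := by
          refine Finset.sum_congr rfl fun i _ => ?_
          rw [Finset.sum_map]
          rfl
      _ = ∑ β ∈ S, c β * ∏ j, x j ^ β j := by
          rw [hSdef, Finset.sum_biUnion hdisj]
  -- key coefficient computation
  have hkey : ∀ (p : MvPolynomial (Fin r) K) (δ : Fin r →₀ ℕ),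
      coeff δ (diffOp p Ψ) = (∏ i, ((δ i).factorial : K))⁻¹ * L (p * monomial δ 1) := by
    intro p δ
    have hMop : ∀ γ : Fin r →₀ ℕ,
        (List.ofFn fun i : Fin r => ((pderiv (R := K) i).toLinearMap ^ γ i)).prod Ψ
        = ∑ β ∈ S, monomial (β - γ) (c β * ∏ i, ((β i).descFactorial (γ i) : K)) := by
      intro γ
      rw [hΨdef, map_sum]
      exact Finset.sum_congr rfl fun β _ => stmt14.prodOfFn_monomial γ β (c β)
    have hinner : ∀ γ : Fin r →₀ ℕ,
        (∑ β ∈ S, if β - γ = δ then c β * ∏ i, ((β i).descFactorial (γ i) : K) else 0)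
        = (∏ i, ((δ i).factorial : K))⁻¹ * L (monomial (γ + δ) 1) := by
      intro γ
      have hzero : ∀ β ∈ S, β ≠ γ + δ →
          (if β - γ = δ then c β * ∏ i, ((β i).descFactorial (γ i) : K) else 0) = 0 := by
        intro β hβ hne
        by_cases hif : β - γ = δ
        · rw [if_pos hif]
          have hnle : ¬ γ ≤ β := by
            intro hle
            exact hne (by rw [← hif, add_tsub_cancel_of_le hle])
          obtain ⟨i, hi⟩ : ∃ i, β i < γ i := by
            by_contra hno
            push_neg at hno
            exact hnle (Finsupp.le_def.mpr hno)
          have hdf : ((β i).descFactorial (γ i) : K) = 0 := by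
            rw [Nat.descFactorial_eq_zero_iff_lt.mpr hi]; simp
          rw [Finset.prod_eq_zero (Finset.mem_univ i) hdf, mul_zero]
        · rw [if_neg hif]
      by_cases hmem : γ + δ ∈ S
      · rw [Finset.sum_eq_single_of_mem _ hmem hzero]
        rw [if_pos (add_tsub_cancel_left γ δ)]
        have hnat : (∏ i, ((δ i).factorial)) * (∏ i, (((γ + δ) i).descFactorial (γ i)))
            = ∏ i, (((γ + δ) i).factorial) := by
          rw [← Finset.prod_mul_distrib]
          refine Finset.prod_congr rfl fun i _ => ?_
          have hle : γ i ≤ (γ + δ) i := by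
            rw [Finsupp.add_apply]; omega
          have hsub : (γ + δ) i - γ i = δ i := by
            rw [Finsupp.add_apply]; omega
          have := Nat.factorial_mul_descFactorial hle
          rw [hsub] at this
          exact this
        have hcast : (∏ i, ((δ i).factorial : K)) * (∏ i, (((γ + δ) i).descFactorial (γ i) : K))
            = ∏ i, ((((γ + δ) i).factorial : K)) := by
          have := congrArg (Nat.cast (R := K)) hnat
          push_cast at this
          exact this
        rw [hcdef]
        simp only []
        rw [← hcast, mul_inv]
        have hd3 : (∏ i, (((γ + δ) i).descFactorial (γ i) : K)) ≠ 0 := by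
          intro h0
          apply hfacne (γ + δ)
          rw [← hcast, h0, mul_zero]
        have habs : ∀ (u v t : K), t ≠ 0 → u⁻¹ * t⁻¹ * v * t = u⁻¹ * v := by
          intro u v t ht
          rw [mul_assoc (u⁻¹ * t⁻¹) v t, mul_comm v t, ← mul_assoc (u⁻¹ * t⁻¹) t v,
            mul_assoc u⁻¹ t⁻¹ t, inv_mul_cancel₀ ht, mul_one]
        exact habs _ _ _ hd3
      · have h1 : 2*n < ∑ i, (γ+δ) i := by
          by_contra hle
          push_neg at hle
          exact hmem ((hS _).mpr hle)
        rw [hLmon _ h1, mul_zero]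
        refine Finset.sum_eq_zero fun β hβ => hzero β hβ ?_
        rintro rfl
        exact hmem hβ
    have hlhs : coeff δ (diffOp p Ψ) = ∑ γ ∈ p.support, coeff γ p *
        ((∏ i, ((δ i).factorial : K))⁻¹ * L (monomial (γ+δ) 1)) := by
      rw [stmt14.diffOp_apply, coeff_sum]
      refine Finset.sum_congr rfl fun γ _ => ?_
      rw [coeff_smul, hMop γ, coeff_sum]
      simp_rw [coeff_monomial]
      rw [hinner γ, smul_eq_mul]
    have hR : L (p * monomial δ 1) = ∑ γ ∈ p.support, coeff γ p * L (monomial (γ+δ) 1) := by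
      conv_lhs => rw [p.as_sum, Finset.sum_mul]
      rw [map_sum]
      refine Finset.sum_congr rfl fun γ _ => ?_
      rw [monomial_mul, mul_one]
      have hm1 : monomial (γ+δ) (coeff γ p) = coeff γ p • monomial (γ+δ) (1:K) := by
        simp [smul_monomial]
      rw [hm1, map_smul, smul_eq_mul]
    rw [hlhs, hR, Finset.mul_sum]
    exact Finset.sum_congr rfl fun γ _ => by ring
  -- first equivalence
  have hiff1 : ∀ p : MvPolynomial (Fin r) K,
      diffOp p Φ = 0 ↔ ∀ q, L (p * q) = 0 := by
    intro p
    constructor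
    · intro h q
      have hδ : ∀ δ : Fin r →₀ ℕ, L (p * monomial δ 1) = 0 := by
        intro δ
        have h2 := congrArg (coeff δ) h
        rw [hΦΨ, hkey p δ] at h2
        simp only [coeff_zero] at h2
        rcases mul_eq_zero.mp h2 with h3 | h3
        · exact absurd h3 (inv_ne_zero (hfacne δ))
        · exact h3
      conv_lhs => rw [q.as_sum]
      rw [Finset.mul_sum, map_sum]
      refine Finset.sum_eq_zero fun δ _ => ?_
      have hmono : monomial δ (coeff δ q) = coeff δ q • monomial δ 1 := by
        simp [smul_monomial]
      rw [hmono, mul_smul_comm, map_smul, hδ δ, smul_zero]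
    · intro h
      rw [hΦΨ]
      apply MvPolynomial.ext
      intro δ
      rw [hkey p δ, coeff_zero, h (monomial δ 1), mul_zero]
  -- kernel characterization
  have hker : ∀ p : MvPolynomial (Fin r) K,
      π p = 0 ↔ ∀ q, L (p * q) = 0 := by
    intro p
    constructor
    · intro h q
      apply hLzero
      rw [map_mul, h, zero_mul]
    · intro h
      by_contra hπ
      set a := π p with ha
      have hd0 : DirectSum.decompose 𝒜 a ≠ 0 := by
        intro h0
        apply hπ
        have h1 : DirectSum.decompose 𝒜 a = DirectSum.decompose 𝒜 0 := by
          rw [h0, DirectSum.decompose_zero]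
        exact (DirectSum.decompose 𝒜).injective h1
      have hne : ((DirectSum.decompose 𝒜 a).support).Nonempty := by
        rw [Finset.nonempty_iff_ne_empty, Ne, DFinsupp.support_eq_empty]
        exact hd0
      set m := ((DirectSum.decompose 𝒜 a).support).max' hne with hm
      have hmmem : m ∈ (DirectSum.decompose 𝒜 a).support := Finset.max'_mem _ hne
      have ham : DirectSum.decompose 𝒜 a m ≠ 0 := by
        rwa [DFinsupp.mem_support_iff] at hmmem
      have hmle : m ≤ 2*n := by
        by_contra hgt
        apply ham
        have hb' : ((DirectSum.decompose 𝒜 a m : A)) ∈ (⊥ : Submodule K A) := by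
          rw [← htop m (by omega)]
          exact (DirectSum.decompose 𝒜 a m).2
        exact Subtype.ext (by simpa using hb')
      have hamA : ((DirectSum.decompose 𝒜 a m : A)) ≠ 0 := by
        simpa [ZeroMemClass.coe_eq_zero] using ham
      obtain ⟨b, hbmem, hab⟩ := hpair m hmle _ (DirectSum.decompose 𝒜 a m).2 hamA
      obtain ⟨q, hq⟩ := hsurj b
      have hsum := DirectSum.sum_support_decompose 𝒜 a
      have hcomp : (DirectSum.decompose 𝒜 (a*b) (2*n) : A)
          = (DirectSum.decompose 𝒜 a m : A) * b := by
        conv_lhs => rw [← hsum, Finset.sum_mul]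
        rw [DirectSum.decompose_sum, DFinsupp.finset_sum_apply,
          AddSubmonoidClass.coe_finset_sum]
        rw [Finset.sum_eq_single_of_mem m hmmem ?_]
        · have hmem2n : (DirectSum.decompose 𝒜 a m : A) * b ∈ 𝒜 (2*n) := by
            have := SetLike.mul_mem_graded (DirectSum.decompose 𝒜 a m).2 hbmem
            rwa [Nat.add_sub_cancel' hmle] at this
          rw [DirectSum.decompose_of_mem_same 𝒜 hmem2n]
        · intro k hk hkm
          have hkle : k ≤ m := Finset.le_max' _ _ hk
          have hmem' := SetLike.mul_mem_graded (DirectSum.decompose 𝒜 a k).2 hbmem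
          rw [DirectSum.decompose_of_mem_ne 𝒜 hmem' (show k + (2*n-m) ≠ 2*n by omega)]
      have hc2 : DirectSum.decompose 𝒜 (a*b) (2*n) ≠ 0 := by
        intro h0
        rw [h0] at hcomp
        exact hab (by simpa using hcomp.symm)
      have hLpq : L (p * q) = α (DirectSum.decompose 𝒜 (a*b) (2*n)) := by
        rw [hLapp, map_mul, ha, hq]
      have := h q
      rw [hLpq] at this
      exact hc2 ((LinearEquiv.map_eq_zero_iff α).mp this)
  have hmain : ∀ p : MvPolynomial (Fin r) K, π p = 0 ↔ diffOp p Φ = 0 :=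
    fun p => (hker p).trans (hiff1 p).symm
  refine ⟨hmain, ?_⟩
  have hset : {p : MvPolynomial (Fin r) K | diffOp p Φ = 0}
      = (RingHom.ker π : Set (MvPolynomial (Fin r) K)) := by
    ext p
    simp only [Set.mem_setOf_eq, SetLike.mem_coe, RingHom.mem_ker]
    exact ((hmain p).symm).trans (Iff.rfl)
  have hspan : Ideal.span {p : MvPolynomial (Fin r) K | diffOp p Φ = 0}
      = RingHom.ker π := by
    rw [hset, Ideal.span_eq]
  exact ⟨(Ideal.quotientKerAlgEquivOfSurjective hsurj).symm.trans
    (Ideal.quotientEquivAlgOfEq K hspan.symm)⟩
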